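/- The non-overlapping group smoothed ℓ0 function r(x) = Σ_b (1 − exp(−(Σ_{i∈G_b} xᵢ²)/(2σ²))), where the groups G_b partition the coordinates into disjoint blocks of size n_v, is convex on the box {x : ‖x‖_∞ ≤ x_m} whenever σ ≥ x_m·√(n_v). -/

import Mathlib

/-!
Each summand is `u ↦ 1 - exp (-‖u‖² / (2σ²))` composed with the linear map extracting one group
of coordinates, so it suffices that this Gaussian bump is convex on the Euclidean ball of radius
`σ`. Along a line `t ↦ u + t • d` the exponent is a quadratic `q`, and the second derivative of
`1 - exp (-q / c)` is nonnegative as soon as `q'² ≤ 2 c q''`; here `q' = 2 ⟪u + t • d, d⟫` and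
`q'' = 2 ‖d‖²`, so this is Cauchy–Schwarz together with `‖u + t • d‖ ≤ σ`. On the box
`‖x‖_∞ ≤ x_m` every group has Euclidean norm at most `x_m √n_v ≤ σ`.
-/

open Real Finset Set

theorem ConvexOn.finset_sum {𝕜 E β ι : Type*} [Semiring 𝕜] [PartialOrder 𝕜] [AddCommMonoid E]
    [AddCommMonoid β] [PartialOrder β] [IsOrderedAddMonoid β] [SMul 𝕜 E] [Module 𝕜 β]
    {s : Set E} (hs : Convex 𝕜 s) (t : Finset ι) {f : ι → E → β}
    (hf : ∀ i ∈ t, ConvexOn 𝕜 s (f i)) : ConvexOn 𝕜 s (fun x => ∑ i ∈ t, f i x) := by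
  classical
  induction t using Finset.induction_on with
  | empty => simpa using convexOn_const (0 : β) hs
  | insert i t hi ih =>
    simp_rw [Finset.sum_insert hi]
    exact (hf i (mem_insert_self i t)).add (ih fun j hj => hf j (mem_insert_of_mem hj))

theorem convexOn_one_sub_exp_neg_quadratic {s : Set ℝ} (hs : Convex ℝ s) {A B C c : ℝ}
    (hc : 0 < c) (h : ∀ t ∈ s, (B + 2 * C * t) ^ 2 ≤ 2 * c * C) :
    ConvexOn ℝ s (fun t => 1 - exp (-(A + B * t + C * t ^ 2) / c)) := by
  set q : ℝ → ℝ := fun t => -(A + B * t + C * t ^ 2) / c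
  have hq : ∀ t, HasDerivAt q (-(B + 2 * C * t) / c) t := fun t => by
    have := ((((hasDerivAt_id t).const_mul B).const_add A).add
      ((hasDerivAt_pow 2 t).const_mul C)).neg.div_const c
    refine this.congr_deriv ?_
    simp only [mul_one, Nat.cast_ofNat, Nat.add_one_sub_one, pow_one]
    ring
  have hf : ∀ t, HasDerivAt (fun t => 1 - exp (q t)) ((B + 2 * C * t) / c * exp (q t)) t :=
    fun t => ((hq t).exp.const_sub 1).congr_deriv (by ring)
  have hf' : ∀ t, HasDerivAt (fun t => (B + 2 * C * t) / c * exp (q t))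
      (exp (q t) * (2 * C / c - ((B + 2 * C * t) / c) ^ 2)) t := fun t => by
    have hlin : HasDerivAt (fun t => (B + 2 * C * t) / c) (2 * C / c) t := by
      simpa using (((hasDerivAt_id t).const_mul (2 * C)).const_add B).div_const c
    exact (hlin.mul (hq t).exp).congr_deriv (by ring)
  refine convexOn_of_hasDerivWithinAt2_nonneg hs
    (fun t _ => (hf t).continuousAt.continuousWithinAt)
    (fun t _ => (hf t).hasDerivWithinAt) (fun t _ => (hf' t).hasDerivWithinAt) fun t ht => ?_
  have hcoef : ((B + 2 * C * t) / c) ^ 2 ≤ 2 * C / c := by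
    rw [div_pow, div_le_div_iff₀ (by positivity) hc]
    nlinarith [h t (interior_subset ht)]
  exact mul_nonneg (exp_pos _).le (sub_nonneg.2 hcoef)

theorem convexOn_one_sub_exp_neg_sq_norm {E : Type*} [NormedAddCommGroup E]
    [InnerProductSpace ℝ E] {σ : ℝ} (hσ : 0 < σ) :
    ConvexOn ℝ (Metric.closedBall (0 : E) σ) (fun u => 1 - exp (-‖u‖ ^ 2 / (2 * σ ^ 2))) := by
  refine ⟨convex_closedBall 0 σ, fun u hu v hv a b ha hb hab => ?_⟩
  set φ : E → ℝ := fun u => 1 - exp (-‖u‖ ^ 2 / (2 * σ ^ 2))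
  set d := v - u
  have hline : ∀ t : ℝ, AffineMap.lineMap u v t = u + t • d := fun t => by
    rw [AffineMap.lineMap_apply_module', add_comm]
  have hnorm : ∀ t : ℝ, ‖u + t • d‖ ^ 2 = ‖u‖ ^ 2 + 2 * inner ℝ u d * t + ‖d‖ ^ 2 * t ^ 2 :=
    fun t => by
      rw [norm_add_sq_real, norm_smul, inner_smul_right, mul_pow, Real.norm_eq_abs, sq_abs]
      ring
  have hslope : ∀ t ∈ Icc (0 : ℝ) 1,
      (2 * inner ℝ u d + 2 * ‖d‖ ^ 2 * t) ^ 2 ≤ 2 * (2 * σ ^ 2) * ‖d‖ ^ 2 := fun t ht => by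
    have hw : ‖u + t • d‖ ≤ σ := by
      simpa [hline] using (convex_closedBall (0 : E) σ).lineMap_mem hu hv ht
    have hcs : |inner ℝ (u + t • d) d| ≤ σ * ‖d‖ :=
      (abs_real_inner_le_norm _ _).trans (mul_le_mul_of_nonneg_right hw (norm_nonneg d))
    have hexp : inner ℝ (u + t • d) d = inner ℝ u d + ‖d‖ ^ 2 * t := by
      rw [inner_add_left, inner_smul_left, real_inner_self_eq_norm_sq]
      simp [mul_comm]
    calc (2 * inner ℝ u d + 2 * ‖d‖ ^ 2 * t) ^ 2 = 4 * inner ℝ (u + t • d) d ^ 2 := by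
          rw [hexp]; ring
      _ ≤ 4 * (σ * ‖d‖) ^ 2 := by gcongr 4 * ?_; exact sq_le_sq.2 (hcs.trans (le_abs_self _))
      _ = 2 * (2 * σ ^ 2) * ‖d‖ ^ 2 := by ring
  have hconv : ConvexOn ℝ (Icc (0 : ℝ) 1) (φ ∘ AffineMap.lineMap u v) := by
    convert convexOn_one_sub_exp_neg_quadratic (A := ‖u‖ ^ 2) (convex_Icc 0 1)
      (by positivity) hslope using 1
    ext t
    simp only [Function.comp_apply, φ, hline, hnorm]
  have key := hconv.2 (left_mem_Icc.2 zero_le_one) (right_mem_Icc.2 zero_le_one) ha hb hab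
  have hab' : a = 1 - b := by linarith
  simpa [AffineMap.lineMap_apply_module, hab'] using key

def coordBlock (k n : ℕ) : (ℕ → ℝ) →ₗ[ℝ] EuclideanSpace ℝ (Fin n) :=
  (WithLp.linearEquiv 2 ℝ (Fin n → ℝ)).symm.toLinearMap ∘ₗ
    LinearMap.funLeft ℝ ℝ (fun i : Fin n => k + i)

theorem norm_coordBlock_sq (k n : ℕ) (x : ℕ → ℝ) :
    ‖coordBlock k n x‖ ^ 2 = ∑ i ∈ range n, x (k + i) ^ 2 := by
  rw [EuclideanSpace.norm_sq_eq, ← Fin.sum_univ_eq_sum_range (fun i => x (k + i) ^ 2) n]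
  simp [coordBlock, LinearMap.funLeft]

theorem norm_coordBlock_le {k n : ℕ} {x : ℕ → ℝ} {xm : ℝ} (hxm : 0 ≤ xm)
    (hx : ∀ i < n, |x (k + i)| ≤ xm) : ‖coordBlock k n x‖ ≤ xm * √n := by
  refine le_of_sq_le_sq ?_ (by positivity)
  calc ‖coordBlock k n x‖ ^ 2 = ∑ i ∈ range n, x (k + i) ^ 2 := norm_coordBlock_sq k n x
    _ ≤ (range n).card • xm ^ 2 := sum_le_card_nsmul _ _ _ fun i hi =>
        sq_le_sq.2 ((hx i (mem_range.1 hi)).trans (le_abs_self xm))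
    _ = (xm * √n) ^ 2 := by rw [card_range, nsmul_eq_mul, mul_pow, sq_sqrt n.cast_nonneg, mul_comm]

theorem convex_setOf_abs_le (N : ℕ) (xm : ℝ) : Convex ℝ {x : ℕ → ℝ | ∀ i < N, |x i| ≤ xm} := by
  have : {x : ℕ → ℝ | ∀ i < N, |x i| ≤ xm} = (Set.Iio N).pi fun _ => Icc (-xm) xm := by
    ext x
    simp [abs_le]
  rw [this]
  exact convex_pi fun _ _ => convex_Icc _ _

theorem nosl0_convexOn_box_general (n_g n_v : ℕ) (σ xm : ℝ) (hσ : 0 < σ)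
    (hxm : 0 ≤ xm) (h : σ ≥ xm * Real.sqrt n_v) :
    ConvexOn ℝ {x : ℕ → ℝ | ∀ i < n_g * n_v, |x i| ≤ xm}
      (fun x : ℕ → ℝ => ∑ b ∈ Finset.range n_g,
        (1 - Real.exp (-(∑ i ∈ Finset.range n_v, x (b * n_v + i) ^ 2) / (2 * σ ^ 2)))) := by
  have hbox := convex_setOf_abs_le (n_g * n_v) xm
  refine ConvexOn.finset_sum hbox _ fun b hb => ?_
  have hmaps : {x : ℕ → ℝ | ∀ i < n_g * n_v, |x i| ≤ xm} ⊆
      coordBlock (b * n_v) n_v ⁻¹' Metric.closedBall 0 σ := fun x hx => by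
    have hblock : ∀ i < n_v, |x (b * n_v + i)| ≤ xm := fun i hi =>
      hx _ (by nlinarith [mem_range.1 hb])
    exact mem_closedBall_zero_iff.2 ((norm_coordBlock_le hxm hblock).trans h)
  simpa [Function.comp_def, norm_coordBlock_sq] using
    ((convexOn_one_sub_exp_neg_sq_norm hσ).comp_linearMap (coordBlock (b * n_v) n_v)).subset
      hmaps hbox

theorem nosl0_convexOn_box (n_g n_v : ℕ) (hnv : 1 ≤ n_v) (σ xm : ℝ) (hσ : 0 < σ)
    (hxm : 0 ≤ xm) (h : σ ≥ xm * Real.sqrt n_v) :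
    ConvexOn ℝ {x : ℕ → ℝ | ∀ i < n_g * n_v, |x i| ≤ xm}
      (fun x : ℕ → ℝ => ∑ b ∈ Finset.range n_g,
        (1 - Real.exp (-(∑ i ∈ Finset.range n_v, x (b * n_v + i) ^ 2) / (2 * σ ^ 2)))) :=
  nosl0_convexOn_box_general n_g n_v σ xm hσ hxm h
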